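/- arXiv:2311.04825 — 3 statements merged into one kernel-verified Lean document; each statement's English description precedes it below -/
import Mathlib

section
/- Let K be a natural number, γ ≥ 0 a real number, and for each k < K let F_k : ℝ → ℝ be monotone nondecreasing, g_k : ℝ → ℝ monotone nonincreasing, and l_k, d_k real numbers. Define sequences (c_k, R_k) and (c'_k, R'_k) for 0 ≤ k ≤ K recursively by c_{k+1} = c_k + d_k − g_k(R_k)·γ and R_{k+1} = max(l_k, F_k(R_k)), and likewise c'_{k+1} = c'_k + d_k − g_k(R'_k)·γ and R'_{k+1} = max(l_k, F_k(R'_k)), from initial values (c_0, R_0) and (c'_0, R'_0). If c_0 ≤ c'_0 and R_0 ≤ R'_0, then c_k ≤ c'_k and R_k ≤ R'_k for every k ≤ K. -/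
/-- Inductive dominance claim of Theorem 1 on resource-robust cuts: dominance
of labels is preserved along any common sequence of extensions. -/
theorem dominance_along_extensions (K : ℕ) (γ : ℝ) (hγ : 0 ≤ γ)
    (F g : ℕ → ℝ → ℝ) (hF : ∀ k < K, Monotone (F k)) (hg : ∀ k < K, Antitone (g k))
    (l d : ℕ → ℝ)
    (c R c' R' : ℕ → ℝ)
    (hcrec : ∀ k < K, c (k + 1) = c k + d k - g k (R k) * γ)
    (hRrec : ∀ k < K, R (k + 1) = max (l k) (F k (R k)))
    (hcrec' : ∀ k < K, c' (k + 1) = c' k + d k - g k (R' k) * γ)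
    (hRrec' : ∀ k < K, R' (k + 1) = max (l k) (F k (R' k)))
    (hc0 : c 0 ≤ c' 0) (hR0 : R 0 ≤ R' 0) :
    ∀ k ≤ K, c k ≤ c' k ∧ R k ≤ R' k := by
  intro k hk
  induction k with
  | zero => exact ⟨hc0, hR0⟩
  | succ n ih =>
    have hn : n < K := Nat.lt_of_succ_le hk
    obtain ⟨hc, hR⟩ := ih (le_of_lt hn)
    constructor
    · rw [hcrec n hn, hcrec' n hn]
      have := mul_le_mul_of_nonneg_right (hg n hn hR) hγ
      linarith
    · rw [hRrec n hn, hRrec' n hn]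
      exact max_le_max le_rfl (hF n hn hR)
end

section
/- Consider the six routes p₁ = [0,4,5], p₂ = [0,1,4,2,5], p₃ = [0,1,4,5], p₄ = [0,4,2,5], p₅ = [0,1,3,5], p₆ = [0,2,3,5], and the two vectors x¹ = (1/2, 1/2, 0, 0, 1/2, 1/2) and x² = (0, 0, 1/2, 1/2, 1/2, 1/2) in ℝ⁶. Then: (i) for every customer i ∈ {1,2,3,4}, ∑_{r=1}^{6} (number of occurrences of i in p_r)·x¹_r = 1 and ∑_{r=1}^{6} (number of occurrences of i in p_r)·x²_r = 1; (ii) for every pair (i,j) ∈ ℕ × ℕ, ∑_{r=1}^{6} (number of occurrences of (i,j) among consecutive pairs of p_r)·x¹_r = ∑_{r=1}^{6} (number of occurrences of (i,j) among consecutive pairs of p_r)·x²_r; and (iii) with c_r = 1 if p_r contains an element of {1,2,3} and c_r = 0 otherwise, ∑_{r=1}^{6} c_r·x¹_r = 3/2 < 2 while ∑_{r=1}^{6} c_r·x²_r = 2. -/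
/-- The six routes of the SCC counterexample. -/
def sccRoutes : Fin 6 → List ℕ
  | 0 => [0, 4, 5]
  | 1 => [0, 1, 4, 2, 5]
  | 2 => [0, 1, 4, 5]
  | 3 => [0, 4, 2, 5]
  | 4 => [0, 1, 3, 5]
  | 5 => [0, 2, 3, 5]

/-- The first fractional solution. -/
noncomputable def sccX1 : Fin 6 → ℝ
  | 0 => 1/2
  | 1 => 1/2
  | 2 => 0
  | 3 => 0
  | 4 => 1/2
  | 5 => 1/2

/-- The second fractional solution. -/
noncomputable def sccX2 : Fin 6 → ℝ
  | 0 => 0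
  | 1 => 0
  | 2 => 1/2
  | 3 => 1/2
  | 4 => 1/2
  | 5 => 1/2

/-- The arcs of a route: its consecutive pairs. -/
def routeArcs (p : List ℕ) : List (ℕ × ℕ) := p.zip p.tail

/-- The SCC coefficient of a route for the subset `{1,2,3}`. -/
noncomputable def sccCoeff (p : List ℕ) : ℝ :=
  if ∃ a ∈ p, a ∈ ({1, 2, 3} : Finset ℕ) then 1 else 0

/-!
`x¹ - x² = ½ (e₁ + e₂ - e₃ - e₄)`, and the routes `p₁, p₂` together traverse exactly the arcs
(hence visit exactly the customers) that `p₃, p₄` traverse, so visit counts and arc flows of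
`x¹` and `x²` agree. The SCC coefficient is not additive over arcs, though: `p₁` avoids
`S = {1,2,3}`, so the pair `p₁, p₂` meets `S` once while `p₃, p₄` meets it twice.
-/

theorem count_add_count_eq_of_perm_append {α : Type*} [BEq α] [LawfulBEq α]
    {l₁ l₂ l₃ l₄ : List α} (h : (l₁ ++ l₂).Perm (l₃ ++ l₄)) (a : α) :
    l₁.count a + l₂.count a = l₃.count a + l₄.count a := by
  rw [← List.count_append, ← List.count_append, h.count_eq]

theorem sum_mul_sccX1_eq_sum_mul_sccX2 {c : Fin 6 → ℝ} (hc : c 0 + c 1 = c 2 + c 3) :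
    ∑ r, c r * sccX1 r = ∑ r, c r * sccX2 r := by
  simp only [Fin.sum_univ_six, sccX1, sccX2]
  linarith

theorem sum_count_mul_sccX1_eq_sum_count_mul_sccX2 {α : Type*} [BEq α] [LawfulBEq α]
    (l : Fin 6 → List α) (h : (l 0 ++ l 1).Perm (l 2 ++ l 3)) (a : α) :
    ∑ r, ((l r).count a : ℝ) * sccX1 r = ∑ r, ((l r).count a : ℝ) * sccX2 r :=
  sum_mul_sccX1_eq_sum_mul_sccX2 (by exact_mod_cast count_add_count_eq_of_perm_append h a)

theorem sccRoutes_perm : (sccRoutes 0 ++ sccRoutes 1).Perm (sccRoutes 2 ++ sccRoutes 3) := by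
  decide

theorem routeArcs_sccRoutes_perm :
    (routeArcs (sccRoutes 0) ++ routeArcs (sccRoutes 1)).Perm
      (routeArcs (sccRoutes 2) ++ routeArcs (sccRoutes 3)) := by
  decide

theorem sum_count_sccRoutes_mul_sccX2 {i : ℕ} (hi : i ∈ ({1, 2, 3, 4} : Finset ℕ)) :
    ∑ r, ((sccRoutes r).count i : ℝ) * sccX2 r = 1 := by
  fin_cases hi <;> norm_num [Fin.sum_univ_six, sccRoutes, sccX2]

theorem sccCoeff_sccRoutes (r : Fin 6) : sccCoeff (sccRoutes r) = if r = 0 then 0 else 1 := by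
  fin_cases r <;> simp [sccCoeff, sccRoutes]

/-- The SCC counterexample: `x¹` and `x²` have the same visit counts and the
same arc flows, yet `x¹` violates the SCC for `S = {1,2,3}` while `x²`
satisfies it. -/
theorem scc_not_robust_counterexample :
    (∀ i ∈ ({1, 2, 3, 4} : Finset ℕ),
        (∑ r : Fin 6, ((sccRoutes r).count i : ℝ) * sccX1 r) = 1 ∧
        (∑ r : Fin 6, ((sccRoutes r).count i : ℝ) * sccX2 r) = 1) ∧
    (∀ i j : ℕ,
        (∑ r : Fin 6, ((routeArcs (sccRoutes r)).count (i, j) : ℝ) * sccX1 r) =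
        (∑ r : Fin 6, ((routeArcs (sccRoutes r)).count (i, j) : ℝ) * sccX2 r)) ∧
    ((∑ r : Fin 6, sccCoeff (sccRoutes r) * sccX1 r) = 3/2 ∧ (3:ℝ)/2 < 2 ∧
     (∑ r : Fin 6, sccCoeff (sccRoutes r) * sccX2 r) = 2) := by
  have visits_eq := sum_count_mul_sccX1_eq_sum_count_mul_sccX2 sccRoutes sccRoutes_perm
  refine ⟨fun i hi => ?_, fun i j => ?_, ?_, by norm_num, ?_⟩
  · rw [visits_eq]
    exact ⟨sum_count_sccRoutes_mul_sccX2 hi, sum_count_sccRoutes_mul_sccX2 hi⟩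
  · exact sum_count_mul_sccX1_eq_sum_count_mul_sccX2 (fun r => routeArcs (sccRoutes r))
      routeArcs_sccRoutes_perm (i, j)
  · simp [Fin.sum_univ_six, sccCoeff_sccRoutes, sccX1]
    norm_num
  · simp [Fin.sum_univ_six, sccCoeff_sccRoutes, sccX2]
    norm_num
end

section
/- Consider the six routes p₁ = [0,4,5], p₂ = [0,1,4,2,5], p₃ = [0,1,4,5], p₄ = [0,4,2,5], p₅ = [0,1,3,5], p₆ = [0,2,3,5], and for each r let c_r = 1 if p_r contains an element of {1,2,3} and c_r = 0 otherwise. Then there is no function λ : ℕ × ℕ → ℝ such that for every r ∈ {1,…,6}, c_r = ∑_{(i,j) consecutive pair of p_r} λ(i,j). -/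
/-- The SCC coefficients of the six routes cannot be written as sums of arc
weights along the routes: the SCC does not admit a robust application. -/
theorem scc_coeffs_not_arc_decomposable :
    ¬ ∃ lam : ℕ × ℕ → ℝ, ∀ r : Fin 6,
        sccCoeff (sccRoutes r) =
          ((routeArcs (sccRoutes r)).map fun ij => lam ij).sum := by
  rintro ⟨lam, h⟩
  have h0 := h 0
  have h1 := h 1
  have h2 := h 2
  have h3 := h 3
  simp [sccRoutes, routeArcs, sccCoeff] at h0 h1 h2 h3
  linarith
end
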